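/- arXiv:2409.07311 — 4 statements merged into one kernel-verified Lean document; each statement's English description precedes it below -/
import Mathlib

section
/- With K and T as above (K the group of block matrices [[εP, v],[0,ε]] in SL(n,Z) with P an even permutation matrix, v ∈ Z^{n-1}, ε = ±1, and T the normal subgroup where the entries of v sum to zero), the quotient group K/T is abelian. -/
/-- The set of matrices in `SL(m+1, ℤ)` of block form `[[ε P, v], [0, ε]]` with
`P` an even permutation matrix, `ε = ±1`, `v ∈ ℤ^m`. -/
def blockSet (m : ℕ) : Set (Matrix.SpecialLinearGroup (Fin (m + 1)) ℤ) :=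
  {A : Matrix.SpecialLinearGroup (Fin (m + 1)) ℤ |
    ∃ (ε : ℤ) (σ : Equiv.Perm (Fin m)),
      (ε = 1 ∨ ε = -1) ∧ Equiv.Perm.sign σ = 1 ∧
      (∀ i j : Fin m, (A : Matrix (Fin (m + 1)) (Fin (m + 1)) ℤ) i.castSucc j.castSucc =
        ε * (if σ j = i then 1 else 0)) ∧
      (∀ j : Fin m, (A : Matrix (Fin (m + 1)) (Fin (m + 1)) ℤ) (Fin.last m) j.castSucc = 0) ∧
      (A : Matrix (Fin (m + 1)) (Fin (m + 1)) ℤ) (Fin.last m) (Fin.last m) = ε}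

namespace Stmt7Aux

open Matrix Finset

variable {m : ℕ}

lemma one_mem : (1 : Matrix.SpecialLinearGroup (Fin (m + 1)) ℤ) ∈ blockSet m := by
  refine ⟨1, 1, Or.inl rfl, by simp, fun i j => ?_, fun j => ?_, ?_⟩
  · simp [Matrix.SpecialLinearGroup.coe_one, Matrix.one_apply, Fin.castSucc_inj, eq_comm]
  · simp [Matrix.SpecialLinearGroup.coe_one, Matrix.one_apply, (Fin.castSucc_lt_last j).ne']
  · simp [Matrix.SpecialLinearGroup.coe_one]

lemma mul_mem {A B : Matrix.SpecialLinearGroup (Fin (m + 1)) ℤ}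
    (hA : A ∈ blockSet m) (hB : B ∈ blockSet m) : A * B ∈ blockSet m := by
  obtain ⟨εa, σa, hεa, hsa, ha1, ha2, ha3⟩ := hA
  obtain ⟨εb, σb, hεb, hsb, hb1, hb2, hb3⟩ := hB
  refine ⟨εa * εb, σa * σb, ?_, by simp [hsa, hsb], fun i j => ?_, fun j => ?_, ?_⟩
  · rcases hεa with h | h <;> rcases hεb with h' | h' <;> simp [h, h']
  · rw [Matrix.SpecialLinearGroup.coe_mul, Matrix.mul_apply, Fin.sum_univ_castSucc]
    rw [hb2, mul_zero, add_zero]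
    have key : ∀ k : Fin m,
        (A : Matrix (Fin (m + 1)) (Fin (m + 1)) ℤ) i.castSucc k.castSucc *
          (B : Matrix (Fin (m + 1)) (Fin (m + 1)) ℤ) k.castSucc j.castSucc =
        if σb j = k then εa * εb * (if σa k = i then 1 else 0) else 0 := by
      intro k
      rw [ha1, hb1]
      split_ifs <;> ring
    rw [Finset.sum_congr rfl fun k _ => key k, Finset.sum_ite_eq]
    simp [Equiv.Perm.mul_apply]
    by_cases hc : σa (σb j) = i <;> simp [hc]
  · rw [Matrix.SpecialLinearGroup.coe_mul, Matrix.mul_apply, Fin.sum_univ_castSucc]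
    rw [hb2, mul_zero, add_zero]
    exact Finset.sum_eq_zero fun k _ => by rw [ha2, zero_mul]
  · rw [Matrix.SpecialLinearGroup.coe_mul, Matrix.mul_apply, Fin.sum_univ_castSucc]
    rw [ha3, hb3, Finset.sum_eq_zero fun k _ => by rw [ha2, zero_mul], zero_add]

lemma inv_mem {A : Matrix.SpecialLinearGroup (Fin (m + 1)) ℤ}
    (hA : A ∈ blockSet m) : A⁻¹ ∈ blockSet m := by
  obtain ⟨ε, σ, hε, hs, h1, h2, h3⟩ := hA
  have hε2 : ε * ε = 1 := by rcases hε with h | h <;> simp [h]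
  set M : Matrix (Fin (m + 1)) (Fin (m + 1)) ℤ :=
    Matrix.of fun i j =>
      Fin.lastCases
        (Fin.lastCases ε (fun _ => (0 : ℤ)) j)
        (fun i' => Fin.lastCases
          (-(A : Matrix (Fin (m + 1)) (Fin (m + 1)) ℤ) (σ i').castSucc (Fin.last m))
          (fun j' => ε * (if σ⁻¹ j' = i' then 1 else 0)) j) i
    with hMdef
  have hMcc : ∀ i j : Fin m, M i.castSucc j.castSucc = ε * (if σ⁻¹ j = i then 1 else 0) := by
    intro i j; simp [hMdef]
  have hMcl : ∀ i : Fin m, M i.castSucc (Fin.last m) =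
      -(A : Matrix (Fin (m + 1)) (Fin (m + 1)) ℤ) (σ i).castSucc (Fin.last m) := by
    intro i; simp [hMdef]
  have hMlc : ∀ j : Fin m, M (Fin.last m) j.castSucc = 0 := by
    intro j; simp [hMdef]
  have hMll : M (Fin.last m) (Fin.last m) = ε := by simp [hMdef]
  have hAM : (A : Matrix (Fin (m + 1)) (Fin (m + 1)) ℤ) * M = 1 := by
    ext i j
    induction i using Fin.lastCases with
    | last =>
      induction j using Fin.lastCases with
      | last =>
        rw [Matrix.mul_apply, Fin.sum_univ_castSucc, h3, hMll,
          Finset.sum_eq_zero fun k _ => by rw [h2, zero_mul], Matrix.one_apply_eq, zero_add, hε2]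
      | cast j =>
        rw [Matrix.mul_apply, Fin.sum_univ_castSucc, hMlc, mul_zero,
          Finset.sum_eq_zero fun k _ => by rw [h2, zero_mul]]
        simp [Matrix.one_apply, (Fin.castSucc_lt_last j).ne']
    | cast i =>
      induction j using Fin.lastCases with
      | last =>
        rw [Matrix.mul_apply, Fin.sum_univ_castSucc, hMll]
        have key : ∀ k : Fin m,
            (A : Matrix (Fin (m + 1)) (Fin (m + 1)) ℤ) i.castSucc k.castSucc *
              M k.castSucc (Fin.last m) =
            if k = σ⁻¹ i then
              -(ε * (A : Matrix (Fin (m + 1)) (Fin (m + 1)) ℤ) (σ k).castSucc (Fin.last m))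
            else 0 := by
          intro k
          rw [h1, hMcl]
          by_cases hk : σ k = i
          · subst hk
            simp
          · have hk2 : ¬ k = σ⁻¹ i := fun h => hk (by simp [h])
            rw [if_neg hk, if_neg hk2, mul_zero, zero_mul]
        rw [Finset.sum_congr rfl fun k _ => key k, Finset.sum_ite_eq']
        simp only [Finset.mem_univ, if_true, Equiv.Perm.coe_inv, Equiv.apply_symm_apply]
        rw [Matrix.one_apply_ne (Fin.castSucc_lt_last i).ne]
        ring
      | cast j =>
        rw [Matrix.mul_apply, Fin.sum_univ_castSucc, hMlc, mul_zero, add_zero]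
        have key : ∀ k : Fin m,
            (A : Matrix (Fin (m + 1)) (Fin (m + 1)) ℤ) i.castSucc k.castSucc *
              M k.castSucc j.castSucc =
            if σ⁻¹ j = k then ε * ε * (if σ k = i then 1 else 0) else 0 := by
          intro k
          rw [h1, hMcc]
          split_ifs <;> ring
        rw [Finset.sum_congr rfl fun k _ => key k, Finset.sum_ite_eq]
        simp only [Finset.mem_univ, if_true, Equiv.Perm.coe_inv, Equiv.apply_symm_apply, hε2, one_mul]
        rw [Matrix.one_apply]
        simp [Fin.castSucc_inj, eq_comm]
  have hcoe : ((A⁻¹ : Matrix.SpecialLinearGroup (Fin (m + 1)) ℤ) :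
      Matrix (Fin (m + 1)) (Fin (m + 1)) ℤ) = M := by
    calc ((A⁻¹ : Matrix.SpecialLinearGroup (Fin (m + 1)) ℤ) :
        Matrix (Fin (m + 1)) (Fin (m + 1)) ℤ)
        = ((A⁻¹ : Matrix.SpecialLinearGroup (Fin (m + 1)) ℤ) :
            Matrix (Fin (m + 1)) (Fin (m + 1)) ℤ) *
          ((A : Matrix (Fin (m + 1)) (Fin (m + 1)) ℤ) * M) := by rw [hAM, Matrix.mul_one]
      _ = (((A⁻¹ * A : Matrix.SpecialLinearGroup (Fin (m + 1)) ℤ)) :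
            Matrix (Fin (m + 1)) (Fin (m + 1)) ℤ) * M := by
          rw [← Matrix.mul_assoc, Matrix.SpecialLinearGroup.coe_mul]
      _ = M := by rw [inv_mul_cancel, Matrix.SpecialLinearGroup.coe_one, Matrix.one_mul]
  exact ⟨ε, σ⁻¹, hε, by simp [hs], fun i j => by rw [hcoe, hMcc],
    fun j => by rw [hcoe, hMlc j], by rw [hcoe, hMll]⟩

end Stmt7Aux

namespace Stmt7Aux

def Kgrp (m : ℕ) : Subgroup (Matrix.SpecialLinearGroup (Fin (m + 1)) ℤ) where
  carrier := blockSet m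
  one_mem' := one_mem
  mul_mem' := mul_mem
  inv_mem' := inv_mem

def φ (m : ℕ) : Kgrp m →* Multiplicative ℤ where
  toFun A := Multiplicative.ofAdd
    (((A : Matrix.SpecialLinearGroup (Fin (m + 1)) ℤ) :
        Matrix (Fin (m + 1)) (Fin (m + 1)) ℤ) (Fin.last m) (Fin.last m) *
      ∑ i : Fin m, ((A : Matrix.SpecialLinearGroup (Fin (m + 1)) ℤ) :
        Matrix (Fin (m + 1)) (Fin (m + 1)) ℤ) i.castSucc (Fin.last m))
  map_one' := by
    simp [Matrix.SpecialLinearGroup.coe_one, Matrix.one_apply, (Fin.castSucc_lt_last _).ne]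
  map_mul' := by
    intro A B
    obtain ⟨εa, σa, hεa, hsa, ha1, ha2, ha3⟩ := A.2
    obtain ⟨εb, σb, hεb, hsb, hb1, hb2, hb3⟩ := B.2
    have hll : (((A * B : Kgrp m) : Matrix.SpecialLinearGroup (Fin (m + 1)) ℤ) :
        Matrix (Fin (m + 1)) (Fin (m + 1)) ℤ) (Fin.last m) (Fin.last m) = εa * εb := by
      show ((((A : Matrix.SpecialLinearGroup (Fin (m + 1)) ℤ) *
        (B : Matrix.SpecialLinearGroup (Fin (m + 1)) ℤ)) :
        Matrix (Fin (m + 1)) (Fin (m + 1)) ℤ)) (Fin.last m) (Fin.last m) = εa * εb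
      rw [Matrix.mul_apply, Fin.sum_univ_castSucc,
        ha3, hb3, Finset.sum_eq_zero fun k _ => by rw [ha2, zero_mul], zero_add]
    have hsum : ∑ i : Fin m, (((A * B : Kgrp m) : Matrix.SpecialLinearGroup (Fin (m + 1)) ℤ) :
        Matrix (Fin (m + 1)) (Fin (m + 1)) ℤ) i.castSucc (Fin.last m) =
        εa * (∑ j : Fin m, ((B : Matrix.SpecialLinearGroup (Fin (m + 1)) ℤ) :
          Matrix (Fin (m + 1)) (Fin (m + 1)) ℤ) j.castSucc (Fin.last m)) +
        εb * (∑ i : Fin m, ((A : Matrix.SpecialLinearGroup (Fin (m + 1)) ℤ) :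
          Matrix (Fin (m + 1)) (Fin (m + 1)) ℤ) i.castSucc (Fin.last m)) := by
      show ∑ i : Fin m, ((((A : Matrix.SpecialLinearGroup (Fin (m + 1)) ℤ) *
        (B : Matrix.SpecialLinearGroup (Fin (m + 1)) ℤ)) :
        Matrix (Fin (m + 1)) (Fin (m + 1)) ℤ)) i.castSucc (Fin.last m) = _
      have step : ∀ i : Fin m,
          (((A : Matrix.SpecialLinearGroup (Fin (m + 1)) ℤ) :
              Matrix (Fin (m + 1)) (Fin (m + 1)) ℤ) *
            ((B : Matrix.SpecialLinearGroup (Fin (m + 1)) ℤ) :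
              Matrix (Fin (m + 1)) (Fin (m + 1)) ℤ)) i.castSucc (Fin.last m) =
          (∑ k : Fin m, if σa k = i then
            εa * ((B : Matrix.SpecialLinearGroup (Fin (m + 1)) ℤ) :
              Matrix (Fin (m + 1)) (Fin (m + 1)) ℤ) k.castSucc (Fin.last m) else 0) +
          ((A : Matrix.SpecialLinearGroup (Fin (m + 1)) ℤ) :
            Matrix (Fin (m + 1)) (Fin (m + 1)) ℤ) i.castSucc (Fin.last m) * εb := by
        intro i
        rw [Matrix.mul_apply, Fin.sum_univ_castSucc, hb3]
        congr 1
        refine Finset.sum_congr rfl fun k _ => ?_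
        rw [ha1]
        split_ifs <;> ring
      rw [Finset.sum_congr rfl fun i _ => step i, Finset.sum_add_distrib, Finset.sum_comm]
      congr 1
      · rw [Finset.mul_sum]
        refine Finset.sum_congr rfl fun k _ => ?_
        rw [Finset.sum_ite_eq]
        simp
      · rw [Finset.mul_sum]
        refine Finset.sum_congr rfl fun i _ => ?_
        ring
    rw [hll, hsum, ha3, hb3, ← ofAdd_add]
    congr 1
    rcases hεa with h | h <;> rcases hεb with h' | h' <;> rw [h, h'] <;> ring

end Stmt7Aux


/-- with `K` the subgroup of block matrices `[[ε P, v], [0, ε]]`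
and `T` the normal subgroup of those with the entries of `v` summing to `0`,
the quotient `K / T` is abelian; equivalently, every commutator of elements of
`K` lies in `T`. -/
theorem stmt_7 (m : ℕ) (hm : 1 ≤ m) :
    ∃ K : Subgroup (Matrix.SpecialLinearGroup (Fin (m + 1)) ℤ),
      (K : Set (Matrix.SpecialLinearGroup (Fin (m + 1)) ℤ)) = blockSet m ∧
      ∃ T : Subgroup K,
        (T : Set K) = {A : K | ∑ i : Fin m,
          ((A : Matrix.SpecialLinearGroup (Fin (m + 1)) ℤ) :
            Matrix (Fin (m + 1)) (Fin (m + 1)) ℤ) i.castSucc (Fin.last m) = 0} ∧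
        T.Normal ∧
        ∀ a b : K, a * b * a⁻¹ * b⁻¹ ∈ T := by
  refine ⟨Stmt7Aux.Kgrp m, rfl, (Stmt7Aux.φ m).ker, ?_, MonoidHom.normal_ker _, ?_⟩
  · ext A
    obtain ⟨ε, σ, hε, hs, h1, h2, h3⟩ := A.2
    have hεne : ε ≠ 0 := by rcases hε with h | h <;> simp [h]
    simp only [SetLike.mem_coe, MonoidHom.mem_ker, Stmt7Aux.φ, MonoidHom.coe_mk,
      OneHom.coe_mk, Set.mem_setOf_eq]
    rw [show (1 : Multiplicative ℤ) = Multiplicative.ofAdd 0 from rfl,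
      Equiv.apply_eq_iff_eq, h3, mul_eq_zero]
    constructor
    · rintro (h | h)
      · exact absurd h hεne
      · exact h
    · exact fun h => Or.inr h
  · intro a b
    rw [MonoidHom.mem_ker, map_mul, map_mul, map_mul, map_inv, map_inv,
      mul_comm (Stmt7Aux.φ m a) (Stmt7Aux.φ m b)]
    group
end

section
/- With K and T as above, the element of K with block form [[I, v],[0,1]] where every entry of v equals 1 maps to an element of infinite order in the quotient group K/T. -/
namespace Stmt8

variable {m : ℕ}

abbrev G (m : ℕ) := Matrix.SpecialLinearGroup (Fin (m + 1)) ℤ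

def eps (A : G m) : ℤ := (A : Matrix (Fin (m+1)) (Fin (m+1)) ℤ) (Fin.last m) (Fin.last m)

def ssum (A : G m) : ℤ :=
  ∑ i : Fin m, (A : Matrix (Fin (m+1)) (Fin (m+1)) ℤ) i.castSucc (Fin.last m)

lemma mem_one : (1 : G m) ∈ blockSet m := by
  refine ⟨1, 1, Or.inl rfl, by simp, ?_, ?_, ?_⟩
  · intro i j
    simp [Matrix.SpecialLinearGroup.coe_one, Matrix.one_apply, Fin.castSucc_inj, eq_comm]
  · intro j
    simp [Matrix.SpecialLinearGroup.coe_one, Matrix.one_apply, (Fin.castSucc_lt_last j).ne']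
  · simp

lemma mem_mul {A B : G m} (hA : A ∈ blockSet m) (hB : B ∈ blockSet m) :
    A * B ∈ blockSet m := by
  obtain ⟨ε, σ, hε, hσ, hP, hr, hc⟩ := hA
  obtain ⟨ε', σ', hε', hσ', hP', hr', hc'⟩ := hB
  refine ⟨ε * ε', σ * σ', ?_, ?_, ?_, ?_, ?_⟩
  · rcases hε with h | h <;> rcases hε' with h' | h' <;> simp [h, h']
  · simp [hσ, hσ']
  · intro i j
    rw [Matrix.SpecialLinearGroup.coe_mul, Matrix.mul_apply, Fin.sum_univ_castSucc]
    simp only [hP, hP', hr', hc']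
    simp [mul_comm, mul_assoc, mul_left_comm, Finset.mul_sum, ite_mul, mul_ite,
      Finset.sum_ite_eq, Finset.sum_ite_eq', Equiv.Perm.mul_apply]
    split_ifs with h0 <;> simp [h0]
  · intro j
    rw [Matrix.SpecialLinearGroup.coe_mul, Matrix.mul_apply, Fin.sum_univ_castSucc]
    simp [hr, hr']
  · rw [Matrix.SpecialLinearGroup.coe_mul, Matrix.mul_apply, Fin.sum_univ_castSucc]
    simp [hr, hc, hc']

lemma mem_inv {A : G m} (hA : A ∈ blockSet m) : A⁻¹ ∈ blockSet m := by
  obtain ⟨ε, σ, hε, hσ, hP, hr, hc⟩ := hA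
  have hε2 : ε * ε = 1 := by rcases hε with h | h <;> simp [h]
  have hCA : (A⁻¹ : G m).val * A.val = 1 := by
    rw [← Matrix.SpecialLinearGroup.coe_mul, inv_mul_cancel,
      Matrix.SpecialLinearGroup.coe_one]
  have hAC : A.val * (A⁻¹ : G m).val = 1 := by
    rw [← Matrix.SpecialLinearGroup.coe_mul, mul_inv_cancel,
      Matrix.SpecialLinearGroup.coe_one]
  set C := (A⁻¹ : G m).val with hC
  have h1 : ∀ i : Fin m, C (Fin.last m) i.castSucc = 0 := by
    intro i
    have h := congrFun (congrFun hCA (Fin.last m)) (σ⁻¹ i).castSucc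
    rw [Matrix.mul_apply, Fin.sum_univ_castSucc] at h
    simp only [hP, (show ∀ x, σ (σ⁻¹ x) = x from fun x => σ.apply_symm_apply x), hr, Matrix.one_apply, mul_zero, add_zero,
      mul_ite, mul_one, zero_mul, Finset.sum_ite_eq, Finset.mem_univ, if_true,
      (Fin.castSucc_lt_last (σ⁻¹ i)).ne', if_false] at h
    rcases hε with h' | h' <;> simpa [h'] using h
  have h2 : C (Fin.last m) (Fin.last m) = ε := by
    have h := congrFun (congrFun hCA (Fin.last m)) (Fin.last m)
    rw [Matrix.mul_apply, Fin.sum_univ_castSucc] at h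
    simp only [h1, zero_mul, Finset.sum_const_zero, zero_add, hc, Matrix.one_apply_eq] at h
    rcases hε with h' | h' <;> simp [h'] at h ⊢ <;> omega
  have h3 : ∀ l j : Fin m, C l.castSucc j.castSucc = ε * (if σ⁻¹ j = l then 1 else 0) := by
    intro l j
    have h := congrFun (congrFun hAC (σ l).castSucc) j.castSucc
    rw [Matrix.mul_apply, Fin.sum_univ_castSucc] at h
    simp only [hP, ite_mul, mul_ite, one_mul, zero_mul, mul_zero] at h
    simp only [σ.injective.eq_iff, Finset.sum_ite_eq', Finset.mem_univ, if_true, h1,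
      mul_zero, add_zero, mul_one, Matrix.one_apply, Fin.castSucc_inj] at h
    rcases eq_or_ne (σ l) j with he | he
    · rw [if_pos he] at h
      rw [if_pos (by rw [Equiv.Perm.inv_eq_iff_eq]; exact he.symm), mul_one]
      calc C l.castSucc j.castSucc = (ε * ε) * C l.castSucc j.castSucc := by
            rw [hε2, one_mul]
        _ = ε := by rw [mul_assoc, h, mul_one]
    · rw [if_neg he] at h
      rw [if_neg (by rw [Equiv.Perm.inv_eq_iff_eq]; exact fun hh => he hh.symm), mul_zero]
      rcases mul_eq_zero.mp h with h0 | h0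
      · rcases hε with h' | h' <;> simp [h'] at h0
      · exact h0
  exact ⟨ε, σ⁻¹, hε, by simp [← hσ], h3, h1, h2⟩

lemma eps_sq {A : G m} (hA : A ∈ blockSet m) : eps A * eps A = 1 := by
  obtain ⟨ε, σ, hε, hσ, hP, hr, hc⟩ := hA
  rw [show eps A = ε from hc]
  rcases hε with h | h <;> simp [h]

lemma eps_mul {A B : G m} (hA : A ∈ blockSet m) (hB : B ∈ blockSet m) :
    eps (A * B) = eps A * eps B := by
  obtain ⟨ε, σ, hε, hσ, hP, hr, hc⟩ := hA
  unfold eps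
  rw [Matrix.SpecialLinearGroup.coe_mul, Matrix.mul_apply, Fin.sum_univ_castSucc]
  simp [hr, hc]

lemma ssum_mul {A B : G m} (hA : A ∈ blockSet m) (hB : B ∈ blockSet m) :
    ssum (A * B) = eps A * ssum B + eps B * ssum A := by
  obtain ⟨ε, σ, hε, hσ, hP, hr, hc⟩ := hA
  obtain ⟨ε', σ', hε', hσ', hP', hr', hc'⟩ := hB
  have key : ∀ i : Fin m, ((A * B : G m) : Matrix (Fin (m+1)) (Fin (m+1)) ℤ)
      i.castSucc (Fin.last m)
      = ε * (B : Matrix (Fin (m+1)) (Fin (m+1)) ℤ) (σ⁻¹ i).castSucc (Fin.last m)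
        + (A : Matrix (Fin (m+1)) (Fin (m+1)) ℤ) i.castSucc (Fin.last m) * ε' := by
    intro i
    rw [Matrix.SpecialLinearGroup.coe_mul, Matrix.mul_apply, Fin.sum_univ_castSucc, hc']
    congr 1
    simp only [hP, mul_ite, ite_mul, mul_one, mul_zero, zero_mul]
    rw [Finset.sum_eq_single (σ⁻¹ i)
      (fun b _ hb => if_neg fun hs => hb (by rw [← hs]; exact (σ.symm_apply_apply b).symm))
      (fun h => absurd (Finset.mem_univ _) h), if_pos (show σ (σ⁻¹ i) = i from σ.apply_symm_apply i)]
  unfold ssum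
  rw [Finset.sum_congr rfl (fun i _ => key i), Finset.sum_add_distrib, ← Finset.mul_sum,
    ← Finset.sum_mul]
  rw [show eps A = ε from hc, show eps B = ε' from hc']
  rw [Equiv.sum_comp (σ⁻¹ : Equiv.Perm (Fin m))
    (fun l => (B : Matrix (Fin (m+1)) (Fin (m+1)) ℤ) l.castSucc (Fin.last m))]
  ring

def Kgrp (m : ℕ) : Subgroup (G m) where
  carrier := blockSet m
  one_mem' := mem_one
  mul_mem' := mem_mul
  inv_mem' := mem_inv

def f (a : Kgrp m) : ℤ := eps (a : G m) * ssum (a : G m)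

lemma ssum_one : ssum (1 : G m) = 0 := by
  unfold ssum
  simp [Matrix.SpecialLinearGroup.coe_one, Matrix.one_apply, (Fin.castSucc_lt_last _).ne]

lemma f_one : f (1 : Kgrp m) = 0 := by
  simp [f, ssum_one]

lemma f_mul (a b : Kgrp m) : f (a * b) = f a + f b := by
  have ea := eps_sq a.2
  have eb := eps_sq b.2
  show eps ((a : G m) * (b : G m)) * ssum ((a : G m) * (b : G m)) = _
  rw [eps_mul a.2 b.2, ssum_mul a.2 b.2]
  unfold f
  linear_combination (eps (b : G m) * ssum (b : G m)) * ea +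
    (eps (a : G m) * ssum (a : G m)) * eb

lemma f_pow (a : Kgrp m) (k : ℕ) : f (a ^ k) = k * f a := by
  induction k with
  | zero => simp [f_one]
  | succ n ih => rw [pow_succ, f_mul, ih]; push_cast; ring

lemma ssum_eq_zero_of_f {a : Kgrp m} (h : f a = 0) : ssum (a : G m) = 0 := by
  have := eps_sq a.2
  calc ssum (a : G m) = (eps (a : G m) * eps (a : G m)) * ssum (a : G m) := by
        rw [this, one_mul]
    _ = eps (a : G m) * f a := by rw [f, mul_assoc]
    _ = 0 := by rw [h, mul_zero]

lemma f_inv (a : Kgrp m) : f a⁻¹ = - f a := by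
  have := f_mul a⁻¹ a
  rw [inv_mul_cancel, f_one] at this
  linarith

def Tgrp (m : ℕ) : Subgroup (Kgrp m) where
  carrier := {a : Kgrp m | ssum (a : G m) = 0}
  one_mem' := ssum_one
  mul_mem' := by
    intro a b ha hb
    show ssum ((a : G m) * (b : G m)) = 0
    rw [ssum_mul a.2 b.2, ha, hb, mul_zero, mul_zero, add_zero]
  inv_mem' := by
    intro a ha
    have ha' : ssum (a : G m) = 0 := ha
    apply ssum_eq_zero_of_f
    rw [f_inv]
    simp [f, ha']

lemma Tgrp_normal : (Tgrp m).Normal := by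
  constructor
  intro a ha g
  have ha' : ssum (a : G m) = 0 := ha
  have hfa : f a = 0 := by simp [f, ha']
  show ssum ((g * a * g⁻¹ : Kgrp m) : G m) = 0
  apply ssum_eq_zero_of_f
  rw [f_mul, f_mul, hfa, f_inv]
  ring

def Mmat (m : ℕ) : Matrix (Fin (m+1)) (Fin (m+1)) ℤ :=
  fun i j => if i = j then 1 else if j = Fin.last m then 1 else 0

lemma Mmat_triangular : (Mmat m).BlockTriangular id := by
  intro i j hji
  have hij : j < i := hji
  have h1 : ¬ (i = j) := fun h => hij.ne h.symm
  have h2 : ¬ (j = Fin.last m) := fun h => (not_lt.mpr (Fin.le_last i)) (h ▸ hij)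
  simp only [Mmat]
  rw [if_neg h1, if_neg h2]

lemma Mmat_det : (Mmat m).det = 1 := by
  rw [Matrix.det_of_upperTriangular Mmat_triangular]
  simp [Mmat]

lemma Mmat_mem : (⟨Mmat m, Mmat_det⟩ : G m) ∈ blockSet m := by
  refine ⟨1, 1, Or.inl rfl, by simp, ?_, ?_, ?_⟩
  · intro i j
    show (if i.castSucc = j.castSucc then (1:ℤ) else if j.castSucc = Fin.last m then 1 else 0)
      = _
    simp [Fin.castSucc_inj, (Fin.castSucc_lt_last j).ne, eq_comm]
  · intro j
    show (if Fin.last m = j.castSucc then (1:ℤ) else if j.castSucc = Fin.last m then 1 else 0)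
      = 0
    rw [if_neg (Fin.castSucc_lt_last j).ne', if_neg (Fin.castSucc_lt_last j).ne]
  · show (if Fin.last m = Fin.last m then (1:ℤ) else _) = 1
    rw [if_pos rfl]

def AK (m : ℕ) : Kgrp m := ⟨⟨Mmat m, Mmat_det⟩, Mmat_mem⟩

lemma f_AK : f (AK m) = m := by
  have h1 : eps ((AK m : G m)) = 1 := by
    show (if Fin.last m = Fin.last m then (1:ℤ) else _) = 1
    rw [if_pos rfl]
  have h2 : ssum ((AK m : G m)) = m := by
    unfold ssum
    have : ∀ i : Fin m, ((AK m : G m) : Matrix (Fin (m+1)) (Fin (m+1)) ℤ)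
        i.castSucc (Fin.last m) = 1 := by
      intro i
      show (if i.castSucc = Fin.last m then (1:ℤ) else if Fin.last m = Fin.last m then 1 else 0)
        = 1
      rw [if_neg (Fin.castSucc_lt_last i).ne, if_pos rfl]
    rw [Finset.sum_congr rfl (fun i _ => this i)]
    simp
  rw [f, h1, h2, one_mul]

end Stmt8

/-- with `K` the subgroup of block matrices `[[ε P, v], [0, ε]]`
and `T` the normal subgroup of those with the entries of `v` summing to `0`,
the element of `K` of block form `[[I, v], [0, 1]]` with every entry of `v`
equal to `1` has infinite order in the quotient `K / T`; equivalently, no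
positive power of it lies in `T`. -/
theorem stmt_8 (m : ℕ) (hm : 1 ≤ m) :
    ∃ K : Subgroup (Matrix.SpecialLinearGroup (Fin (m + 1)) ℤ),
      (K : Set (Matrix.SpecialLinearGroup (Fin (m + 1)) ℤ)) = blockSet m ∧
      ∃ T : Subgroup K,
        (T : Set K) = {A : K | ∑ i : Fin m,
          ((A : Matrix.SpecialLinearGroup (Fin (m + 1)) ℤ) :
            Matrix (Fin (m + 1)) (Fin (m + 1)) ℤ) i.castSucc (Fin.last m) = 0} ∧
        T.Normal ∧
        ∃ A : K,
          (∀ i j : Fin (m + 1),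
            ((A : Matrix.SpecialLinearGroup (Fin (m + 1)) ℤ) :
              Matrix (Fin (m + 1)) (Fin (m + 1)) ℤ) i j =
              if i = j then 1 else if j = Fin.last m then 1 else 0) ∧
          ∀ k : ℕ, 0 < k → A ^ k ∉ T := by
  refine ⟨Stmt8.Kgrp m, rfl, Stmt8.Tgrp m, rfl, Stmt8.Tgrp_normal, Stmt8.AK m,
    fun i j => rfl, ?_⟩
  intro k hk hmem
  have hfk : Stmt8.f (Stmt8.AK m ^ k) = k * m := by rw [Stmt8.f_pow, Stmt8.f_AK]
  have hzero : Stmt8.f (Stmt8.AK m ^ k) = 0 := by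
    have hs : Stmt8.ssum ((Stmt8.AK m ^ k : Stmt8.Kgrp m) : Stmt8.G m) = 0 := hmem
    rw [Stmt8.f, hs, mul_zero]
  rw [hfk] at hzero
  have : (k : ℤ) * m ≠ 0 := by positivity
  exact this hzero
end

section
/- Let π be the group with generators a_0, ..., a_{2g-1} (g >= 1) and the single relation a_0 a_1 ··· a_{2g-1} = a_{2g-1} ··· a_1 a_0. Then the assignment a_i ↦ a_{i+1} for 0 <= i <= 2g-3, a_{2g-2} ↦ a_0, and a_{2g-1} ↦ a_0^{-1} a_{2g-1} a_0^{-1} extends to a well-defined endomorphism w of π. -/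
/-- The relator `a_0 ⋯ a_{2g-1} (a_{2g-1} ⋯ a_0)⁻¹` of the genus-`g` surface
group. -/
def surfaceRel (g : ℕ) : FreeGroup (Fin (2 * g)) :=
  (List.ofFn fun i : Fin (2 * g) => FreeGroup.of i).prod *
    ((List.ofFn fun i : Fin (2 * g) => FreeGroup.of i).reverse.prod)⁻¹

/-- The one-relator group `⟨a_0, …, a_{2g-1} ∣ a_0 ⋯ a_{2g-1} = a_{2g-1} ⋯ a_0⟩`. -/
abbrev SurfaceGroup (g : ℕ) :=
  PresentedGroup ({surfaceRel g} : Set (FreeGroup (Fin (2 * g))))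

/-- The generator `a_i` of the surface group. -/
def gen (g : ℕ) (i : Fin (2 * g)) : SurfaceGroup g := PresentedGroup.of i

/-- The image of the generator `a_i` under the endomorphism `w`:
`a_i ↦ a_{i+1}` for `i ≤ 2g-3`, `a_{2g-2} ↦ a_0`, and
`a_{2g-1} ↦ a_0⁻¹ a_{2g-1} a_0⁻¹`. -/
def wImage (g : ℕ) (i : Fin (2 * g)) : SurfaceGroup g :=
  if h : (i : ℕ) < 2 * g - 2 then gen g ⟨(i : ℕ) + 1, by omega⟩
  else if (i : ℕ) = 2 * g - 2 then gen g ⟨0, by have := i.isLt; omega⟩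
  else (gen g ⟨0, by have := i.isLt; omega⟩)⁻¹ * gen g i *
    (gen g ⟨0, by have := i.isLt; omega⟩)⁻¹

lemma key {G : Type*} [Group G] (m : ℕ) (a w : Fin (m + 2) → G)
    (hw : ∀ i : Fin (m + 2), w i =
      if _ : (i : ℕ) < m then a ⟨(i : ℕ) + 1, by omega⟩
      else if (i : ℕ) = m then a ⟨0, by omega⟩
      else (a ⟨0, by omega⟩)⁻¹ * a i * (a ⟨0, by omega⟩)⁻¹)
    (hR : (List.ofFn a).prod = (List.ofFn a).reverse.prod) :
    (List.ofFn w).prod = (List.ofFn w).reverse.prod := by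
  set B : List G := List.ofFn fun i : Fin m => a ⟨(i : ℕ) + 1, by omega⟩ with hB
  set a0 : G := a ⟨0, by omega⟩ with ha0
  set aL : G := a (Fin.last (m + 1)) with haL
  have h00 : (0 : Fin (m + 2)) = ⟨0, by omega⟩ := by ext; simp
  have hA : List.ofFn a = a0 :: B.concat aL := by
    rw [List.ofFn_succ]
    have e0 : a 0 = a0 := by rw [h00]
    rw [e0]
    congr 1
    rw [List.ofFn_succ']
    have e : (fun i : Fin m => a ((Fin.castSucc i).succ)) =
        (fun i : Fin m => a ⟨(i : ℕ) + 1, by omega⟩) := by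
      funext i; exact congrArg a (Fin.ext (by simp))
    rw [e]
    rfl
  have hW : List.ofFn w = (B.concat a0).concat (a0⁻¹ * aL * a0⁻¹) := by
    rw [List.ofFn_succ']
    have elast : w (Fin.last (m + 1)) = a0⁻¹ * aL * a0⁻¹ := by
      rw [hw]
      have hv : ((Fin.last (m + 1) : Fin (m + 2)) : ℕ) = m + 1 := by simp
      rw [dif_neg (by omega), if_neg (by omega)]
    rw [elast]
    congr 1
    rw [List.ofFn_succ']
    have e : (fun i : Fin m => w (i.castSucc.castSucc)) = fun i : Fin m =>
        a ⟨(i : ℕ) + 1, by omega⟩ := by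
      funext i
      rw [hw]
      have hv : ((i.castSucc.castSucc : Fin (m + 2)) : ℕ) = (i : ℕ) := by simp
      rw [dif_pos (by omega : ((i.castSucc.castSucc : Fin (m + 2)) : ℕ) < m)]
      congr 1
    have e2 : w ((Fin.last m).castSucc) = a0 := by
      rw [hw]
      have hv : (((Fin.last m).castSucc : Fin (m + 2)) : ℕ) = m := by simp
      rw [dif_neg (by omega), if_pos (by omega)]
    rw [e, e2]
  rw [hA] at hR
  rw [hW]
  simp only [List.concat_eq_append, List.reverse_append, List.reverse_cons, List.reverse_nil,
    List.nil_append, List.cons_append, List.prod_cons, List.prod_append, List.prod_nil,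
    mul_one, one_mul] at hR ⊢
  refine mul_left_cancel (a := a0) (mul_right_cancel (b := a0) ?_)
  simpa [mul_assoc] using hR

/-- the assignment `a_i ↦ a_{i+1}` (`0 ≤ i ≤ 2g-3`),
`a_{2g-2} ↦ a_0`, `a_{2g-1} ↦ a_0⁻¹ a_{2g-1} a_0⁻¹` extends to a well-defined
endomorphism of the surface group. -/
theorem stmt_10 (g : ℕ) (hg : 1 ≤ g) :
    ∃ w : SurfaceGroup g →* SurfaceGroup g,
      ∀ i : Fin (2 * g), w (gen g i) = wImage g i := by
  obtain ⟨m, hm⟩ : ∃ m, 2 * g = m + 2 := ⟨2 * g - 2, by omega⟩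
  have h1 : ∀ r ∈ ({surfaceRel g} : Set (FreeGroup (Fin (2 * g)))),
      FreeGroup.lift (wImage g) r = 1 := by
    intro r hr
    rw [Set.mem_singleton_iff] at hr
    subst hr
    have hmapped : FreeGroup.lift (wImage g) (surfaceRel g)
        = (List.ofFn (wImage g)).prod * ((List.ofFn (wImage g)).reverse.prod)⁻¹ := by
      have hco : (⇑(FreeGroup.lift (wImage g)) ∘ fun i : Fin (2 * g) => FreeGroup.of i)
          = wImage g := funext fun i => FreeGroup.lift_apply_of
      simp [surfaceRel, map_list_prod, List.map_reverse, List.map_ofFn, hco]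
    rw [hmapped, mul_inv_eq_one]
    -- the defining relation holds in the surface group
    have hRel : (List.ofFn fun i : Fin (2 * g) => gen g i).prod
        = (List.ofFn fun i : Fin (2 * g) => gen g i).reverse.prod := by
      have hmem : surfaceRel g ∈ Subgroup.normalClosure
          ({surfaceRel g} : Set (FreeGroup (Fin (2 * g)))) :=
        Subgroup.subset_normalClosure rfl
      have h0 : PresentedGroup.mk ({surfaceRel g} : Set (FreeGroup (Fin (2 * g))))
          (surfaceRel g) = 1 := (QuotientGroup.eq_one_iff _).mpr hmem
      have h2 : (PresentedGroup.mk _) ∘ (FreeGroup.of : Fin (2 * g) → _)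
          = fun i : Fin (2 * g) => gen g i := rfl
      have h0' : PresentedGroup.mk ({surfaceRel g} : Set (FreeGroup (Fin (2 * g))))
          ((List.ofFn fun i : Fin (2 * g) => FreeGroup.of i).prod *
            ((List.ofFn fun i : Fin (2 * g) => FreeGroup.of i).reverse.prod)⁻¹) = 1 := h0
      rw [map_mul, map_inv, map_list_prod, map_list_prod, List.map_reverse, List.map_ofFn,
        h2, mul_inv_eq_one] at h0'
      exact h0'
    set a : Fin (m + 2) → SurfaceGroup g := fun i => gen g (Fin.cast hm.symm i) with ha
    set w' : Fin (m + 2) → SurfaceGroup g := fun i => wImage g (Fin.cast hm.symm i) with hw'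
    rw [List.ofFn_congr hm (wImage g)]
    refine key m a w' ?_ ?_
    · intro i
      have hc : ((Fin.cast hm.symm i : Fin (2 * g)) : ℕ) = (i : ℕ) := rfl
      have hm2 : 2 * g - 2 = m := by omega
      rw [hw']
      simp only [wImage]
      rcases lt_trichotomy ((i : ℕ)) m with h | h | h
      · rw [dif_pos (by omega : ((Fin.cast hm.symm i : Fin (2 * g)) : ℕ) < 2 * g - 2),
          dif_pos h]
        exact congrArg (gen g) (Fin.ext (by simp))
      · rw [dif_neg (by omega), if_pos (by omega), dif_neg (by omega), if_pos h]
        exact congrArg (gen g) (Fin.ext (by simp))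
      · rw [dif_neg (by omega), if_neg (by omega), dif_neg (by omega), if_neg (by omega)]
        have e0 : gen g ⟨0, by omega⟩ = a ⟨0, by omega⟩ :=
          congrArg (gen g) (Fin.ext (by simp))
        rw [e0, ha]
    · rw [ha, ← List.ofFn_congr hm (fun i : Fin (2 * g) => gen g i)]
      exact hRel
  refine ⟨PresentedGroup.toGroup h1, fun i => ?_⟩
  exact PresentedGroup.toGroup.of h1
end

section
/- Let π = ⟨a_0,...,a_{2g-1} | a_0···a_{2g-1} = a_{2g-1}···a_0⟩ with g >= 1, let w be the endomorphism of π sending a_i ↦ a_{i+1} for 0 <= i <= 2g-3, a_{2g-2} ↦ a_0, and a_{2g-1} ↦ a_0^{-1} a_{2g-1} a_0^{-1}, and let d be the endomorphism of π sending a_{2g-1} ↦ (a_{2g-2}^{-1} ··· a_1^{-1} a_0^{-1}) a_{2g-1} (a_0^{-1} a_1^{-1} ··· a_{2g-2}^{-1}) and fixing a_0, ..., a_{2g-2}. Then w^{2g-1} = d. -/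
/-- The product `a_0 a_1 ⋯ a_{2g-2}`. -/
def uProd (g : ℕ) : SurfaceGroup g :=
  (List.ofFn fun i : Fin (2 * g - 1) => gen g ⟨i, by have := i.isLt; omega⟩).prod

/-- The product `a_{2g-2} ⋯ a_1 a_0`. -/
def vProd (g : ℕ) : SurfaceGroup g :=
  (List.ofFn fun i : Fin (2 * g - 1) => gen g ⟨i, by have := i.isLt; omega⟩).reverse.prod

section Aux
variable (g : ℕ)

/-- Total version of the generator function. -/
def genA (i : ℕ) : SurfaceGroup g :=
  if h : i < 2 * g then gen g ⟨i, h⟩ else 1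

lemma genA_eq {i : ℕ} (h : i < 2 * g) : genA g i = gen g ⟨i, h⟩ := dif_pos h

/-- `a_0 a_1 ⋯ a_{k-1}`. -/
def prodX : ℕ → SurfaceGroup g
  | 0 => 1
  | k + 1 => prodX k * genA g k

/-- `a_{k-1} ⋯ a_1 a_0`. -/
def prodY : ℕ → SurfaceGroup g
  | 0 => 1
  | k + 1 => genA g k * prodY k

/-- `a_1 a_2 ⋯ a_k`. -/
def prodXs : ℕ → SurfaceGroup g
  | 0 => 1
  | k + 1 => prodXs k * genA g (k + 1)

/-- `a_k ⋯ a_2 a_1`. -/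
def prodYs : ℕ → SurfaceGroup g
  | 0 => 1
  | k + 1 => genA g (k + 1) * prodYs k

lemma prodX_ofFn (k : ℕ) :
    prodX g k = (List.ofFn fun i : Fin k => genA g i).prod := by
  induction k with
  | zero => simp [prodX]
  | succ k ih =>
    rw [List.ofFn_succ']
    simp only [List.concat_eq_append, List.prod_append, List.prod_cons, List.prod_nil,
      Fin.coe_castSucc, Fin.val_last, mul_one]
    rw [prodX, ih]

lemma prodY_ofFn (k : ℕ) :
    prodY g k = (List.ofFn fun i : Fin k => genA g i).reverse.prod := by
  induction k with
  | zero => simp [prodY]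
  | succ k ih =>
    rw [List.ofFn_succ']
    simp only [List.concat_eq_append, List.reverse_append, List.reverse_cons,
      List.reverse_nil, List.nil_append, List.cons_append, List.prod_cons,
      Fin.coe_castSucc, Fin.val_last]
    rw [prodY, ih]

lemma mul_prodXs (k : ℕ) : genA g 0 * prodXs g k = prodX g (k + 1) := by
  induction k with
  | zero => simp [prodXs, prodX]
  | succ k ih =>
    rw [prodXs, ← mul_assoc, ih]
    conv_rhs => rw [prodX]

lemma prodYs_mul (k : ℕ) : prodYs g k * genA g 0 = prodY g (k + 1) := by
  induction k with
  | zero => simp [prodYs, prodY]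
  | succ k ih =>
    rw [prodYs, mul_assoc, ih]
    conv_rhs => rw [prodY]

end Aux

section Main

variable {g : ℕ} (hg : 1 ≤ g) (w : Monoid.End (SurfaceGroup g))
  (hw : ∀ i : Fin (2 * g), w (gen g i) = wImage g i)

include hg hw

lemma w_genA_lt {i : ℕ} (hi : i < 2 * g - 1) :
    w (genA g i) = genA g ((i + 1) % (2 * g - 1)) := by
  have h : i < 2 * g := by omega
  rw [genA_eq g h, hw ⟨i, h⟩]
  simp only [wImage]
  rcases lt_or_ge i (2 * g - 2) with h2 | h2
  · rw [dif_pos (show ((⟨i, h⟩ : Fin (2 * g)) : ℕ) < 2 * g - 2 from h2)]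
    rw [Nat.mod_eq_of_lt (by omega), genA_eq g (by omega)]
  · have h3 : i = 2 * g - 2 := by omega
    have h2' : ¬ i < 2 * g - 2 := by omega
    have h3' : i = 2 * g - 2 := h3
    rw [dif_neg (show ¬ ((⟨i, h⟩ : Fin (2 * g)) : ℕ) < 2 * g - 2 from h2')]
    rw [if_pos (show ((⟨i, h⟩ : Fin (2 * g)) : ℕ) = 2 * g - 2 from h3')]
    have h4 : (i + 1) % (2 * g - 1) = 0 := by
      have : i + 1 = 2 * g - 1 := by omega
      rw [this, Nat.mod_self]
    rw [h4, genA_eq g (by omega)]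

lemma w_genA_last :
    w (genA g (2 * g - 1)) =
      (genA g 0)⁻¹ * genA g (2 * g - 1) * (genA g 0)⁻¹ := by
  have h : 2 * g - 1 < 2 * g := by omega
  have h0 : (0 : ℕ) < 2 * g := by omega
  rw [genA_eq g h, genA_eq g h0, hw ⟨2 * g - 1, h⟩]
  simp only [wImage]
  have hn1 : ¬ (2 * g - 1) < 2 * g - 2 := by omega
  have hn2 : ¬ (2 * g - 1) = 2 * g - 2 := by omega
  rw [dif_neg (show ¬ ((⟨2 * g - 1, h⟩ : Fin (2 * g)) : ℕ) < 2 * g - 2 from hn1)]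
  rw [if_neg (show ¬ ((⟨2 * g - 1, h⟩ : Fin (2 * g)) : ℕ) = 2 * g - 2 from hn2)]

lemma w_iter_genA (k : ℕ) {i : ℕ} (hi : i < 2 * g - 1) :
    (⇑w)^[k] (genA g i) = genA g ((i + k) % (2 * g - 1)) := by
  induction k generalizing i with
  | zero => simp [Nat.mod_eq_of_lt hi]
  | succ k ih =>
    rw [Function.iterate_succ_apply, w_genA_lt hg w hw hi,
      ih (Nat.mod_lt _ (by omega)), Nat.mod_add_mod,
      show i + 1 + k = i + (k + 1) from by omega]

lemma w_prodX {k : ℕ} (hk : k ≤ 2 * g - 2) : w (prodX g k) = prodXs g k := by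
  induction k with
  | zero => simp [prodX, prodXs]
  | succ k ih =>
    rw [prodX, map_mul, ih (by omega), w_genA_lt hg w hw (by omega),
      Nat.mod_eq_of_lt (by omega), prodXs]

lemma w_prodY {k : ℕ} (hk : k ≤ 2 * g - 2) : w (prodY g k) = prodYs g k := by
  induction k with
  | zero => simp [prodY, prodYs]
  | succ k ih =>
    rw [prodY, map_mul, ih (by omega), w_genA_lt hg w hw (by omega),
      Nat.mod_eq_of_lt (by omega), prodYs]

lemma w_iter_last {k : ℕ} (hk : k ≤ 2 * g - 1) :
    (⇑w)^[k] (genA g (2 * g - 1)) =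
      (prodX g k)⁻¹ * genA g (2 * g - 1) * (prodY g k)⁻¹ := by
  induction k with
  | zero => simp [prodX, prodY]
  | succ k ih =>
    rw [Function.iterate_succ_apply', ih (by omega), map_mul, map_mul, map_inv,
      map_inv, w_genA_last hg w hw, w_prodX hg w hw (by omega),
      w_prodY hg w hw (by omega), ← mul_prodXs, ← prodYs_mul, mul_inv_rev,
      mul_inv_rev]
    group

end Main

/-- if `w` is the endomorphism `a_i ↦ a_{i+1}` (`i ≤ 2g-3`),
`a_{2g-2} ↦ a_0`, `a_{2g-1} ↦ a_0⁻¹ a_{2g-1} a_0⁻¹`, and `d` is the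
endomorphism fixing `a_0, …, a_{2g-2}` and sending
`a_{2g-1} ↦ (a_{2g-2}⁻¹ ⋯ a_0⁻¹) a_{2g-1} (a_0⁻¹ ⋯ a_{2g-2}⁻¹)`, then
`w^(2g-1) = d`. -/
theorem stmt_11 (g : ℕ) (hg : 1 ≤ g) (w d : Monoid.End (SurfaceGroup g))
    (hw : ∀ i : Fin (2 * g), w (gen g i) = wImage g i)
    (hd₁ : ∀ i : Fin (2 * g), (i : ℕ) < 2 * g - 1 → d (gen g i) = gen g i)
    (hd₂ : d (gen g ⟨2 * g - 1, by omega⟩) =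
      (uProd g)⁻¹ * gen g ⟨2 * g - 1, by omega⟩ * (vProd g)⁻¹) :
    w ^ (2 * g - 1) = d := by
  have hlist : (List.ofFn fun i : Fin (2 * g - 1) =>
        gen g ⟨i, by have := i.isLt; omega⟩) =
      List.ofFn fun i : Fin (2 * g - 1) => genA g i :=
    congrArg List.ofFn (funext fun i =>
      (genA_eq g (by have := i.isLt; omega)).symm)
  have hu : uProd g = prodX g (2 * g - 1) := by
    unfold uProd
    rw [prodX_ofFn]
    exact congrArg List.prod hlist
  have hv : vProd g = prodY g (2 * g - 1) := by
    unfold vProd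
    rw [prodY_ofFn]
    exact congrArg List.prod (congrArg List.reverse hlist)
  have hpow : ((w ^ (2 * g - 1) : Monoid.End (SurfaceGroup g)) :
      SurfaceGroup g → SurfaceGroup g) = (⇑w)^[2 * g - 1] := rfl
  have key : ∀ x : Fin (2 * g),
      (w ^ (2 * g - 1) : Monoid.End (SurfaceGroup g)) (PresentedGroup.of x)
        = d (PresentedGroup.of x) := by
    intro x
    have hx := x.isLt
    have hofx : (PresentedGroup.of x : SurfaceGroup g) = gen g x := rfl
    rw [hofx, show (w ^ (2 * g - 1) : Monoid.End (SurfaceGroup g))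
        (gen g x) = (⇑w)^[2 * g - 1] (gen g x) from congrFun hpow _]
    rcases lt_or_ge (x : ℕ) (2 * g - 1) with h | h
    · rw [hd₁ x h]
      have hgx : gen g x = genA g (x : ℕ) := by
        rw [genA_eq g hx]
      rw [hgx, w_iter_genA hg w hw _ h, Nat.add_mod_right,
        Nat.mod_eq_of_lt h]
    · have hx1 : (x : ℕ) = 2 * g - 1 := by omega
      have hxe : x = ⟨2 * g - 1, by omega⟩ := Fin.ext hx1
      rw [hxe, hd₂, hu, hv]
      have hgx : gen g (⟨2 * g - 1, by omega⟩ : Fin (2 * g)) =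
          genA g (2 * g - 1) := by
        rw [genA_eq g (by omega)]
      rw [hgx, w_iter_last hg w hw (le_refl _)]
  exact PresentedGroup.ext key
end
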